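/- arXiv:1911.00978 — 4 statements merged into one kernel-verified Lean document; each statement's English description precedes it below -/
import Mathlib

section
/- The function P(x,t) = Σ_{k=0}^{min(x,ξ)} [λ(t)^{x-k} e^{-λ(t)}/(x-k)!] · [C(ξ,k) w(t)^k (1-w(t))^{ξ-k}], with w(t) = e^{-γ(t-t₀)} and λ(t) = (k₀/γ)(1 - e^{-γ(t-t₀)}) for constants k₀, γ > 0, satisfies the birth-death chemical master equation ∂P(x,t)/∂t = k₀[P(x-1,t) - P(x,t)] + γ[(x+1)P(x+1,t) - xP(x,t)] for all x ∈ ℕ (with the convention P(-1,t) = 0). -/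
/-!
In terms of generating functions, `P(·, t)` has generating function
`e^{λ(t)(z - 1)} · (1 - w(t) + w(t) z)^ξ`: the Poisson law of the immigrants times the
binomial law of the `ξ` initial molecules that are still alive. The master equation reads
`∂ₜG = k₀(z - 1)G + γ(1 - z)∂_zG`, and since its right-hand side is multiplication plus a
first-order differential operator in `z`, it satisfies the Leibniz rule
`L_{k₀}(GH) = (L_{k₀}G)H + G(L₀H)`. It therefore suffices that the Poisson factor solves the
full equation (because `λ' = k₀ - γλ`) and each Bernoulli factor `1 - w + wz` solves the pure
death equation (because `w' = -γw`).
-/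

open PowerSeries Finset

/-- The right-hand side of the master equation acting on the generating function
`G(z) = ∑ₓ P(x) zˣ`. -/
noncomputable def birthDeathOperator (k₀ γ : ℝ) (G : ℝ⟦X⟧) : ℝ⟦X⟧ :=
  C k₀ * (X - 1) * G + C γ * (1 - X) * d⁄dX ℝ G

theorem coeff_birthDeathOperator (k₀ γ : ℝ) (G : ℝ⟦X⟧) (n : ℕ) :
    coeff n (birthDeathOperator k₀ γ G)
      = k₀ * ((if n = 0 then 0 else coeff (n - 1) G) - coeff n G)
        + γ * (((n : ℝ) + 1) * coeff (n + 1) G - (n : ℝ) * coeff n G) := by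
  have hX : coeff n (X * G) = if n = 0 then 0 else coeff (n - 1) G := by
    rcases n with _ | n <;> simp [coeff_succ_X_mul]
  have hXD : coeff n (X * d⁄dX ℝ G) = n * coeff n G := by
    rcases n with _ | n
    · simp
    · rw [coeff_succ_X_mul, coeff_derivative]; push_cast; ring
  simp only [birthDeathOperator, mul_assoc, sub_mul, one_mul, mul_sub, map_add, map_sub,
    coeff_C_mul, hX, hXD, coeff_derivative]
  ring

theorem birthDeathOperator_mul (k₀ γ : ℝ) (G H : ℝ⟦X⟧) :
    birthDeathOperator k₀ γ (G * H)
      = birthDeathOperator k₀ γ G * H + G * birthDeathOperator 0 γ H := by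
  simp only [birthDeathOperator, Derivation.leibniz, smul_eq_mul, map_zero]
  ring

theorem birthDeathOperator_zero_one (γ : ℝ) : birthDeathOperator 0 γ 1 = 0 := by
  simp [birthDeathOperator]

def SolvesBirthDeathCMEAt (k₀ γ : ℝ) (G : ℝ → ℝ⟦X⟧) (t : ℝ) : Prop :=
  ∀ n, HasDerivAt (fun s => coeff n (G s)) (coeff n (birthDeathOperator k₀ γ (G t))) t

namespace SolvesBirthDeathCMEAt

variable {k₀ γ t : ℝ} {G H : ℝ → ℝ⟦X⟧}

theorem mul (hG : SolvesBirthDeathCMEAt k₀ γ G t) (hH : SolvesBirthDeathCMEAt 0 γ H t) :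
    SolvesBirthDeathCMEAt k₀ γ (G * H) t := by
  intro n
  simp only [Pi.mul_apply, coeff_mul, birthDeathOperator_mul, map_add, ← sum_add_distrib]
  exact HasDerivAt.fun_sum fun p _ => (hG p.1).mul (hH p.2)

theorem pow (hG : SolvesBirthDeathCMEAt 0 γ G t) (m : ℕ) :
    SolvesBirthDeathCMEAt 0 γ (G ^ m) t := by
  induction m with
  | zero =>
    intro n
    simpa [birthDeathOperator_zero_one] using hasDerivAt_const t (coeff n (1 : ℝ⟦X⟧))
  | succ m ih => rw [pow_succ]; exact ih.mul hG

end SolvesBirthDeathCMEAt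

theorem solvesBirthDeathCMEAt_bernoulli {γ t : ℝ} {w : ℝ → ℝ}
    (hw : HasDerivAt w (-γ * w t) t) :
    SolvesBirthDeathCMEAt 0 γ (fun s => C (1 - w s) + C (w s) * X) t := by
  intro n
  rcases n with _ | _ | n
  · simpa [coeff_birthDeathOperator, coeff_X] using hw.const_sub 1
  · simpa [coeff_birthDeathOperator, coeff_X] using hw
  · simpa [coeff_birthDeathOperator, coeff_X, coeff_C] using hasDerivAt_const t (0 : ℝ)

theorem coeff_bernoulli_pow (p : ℝ) (m k : ℕ) :
    coeff k ((C (1 - p) + C p * X) ^ m) = m.choose k * p ^ k * (1 - p) ^ (m - k) := by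
  have hterm : ∀ i, (C p * X) ^ i * C (1 - p) ^ (m - i) * (m.choose i : ℝ⟦X⟧)
      = C (m.choose i * p ^ i * (1 - p) ^ (m - i)) * X ^ i := by
    intro i
    simp only [map_mul, map_pow, map_natCast]
    ring
  rw [add_comm, add_pow]
  simp only [hterm, map_sum, coeff_C_mul_X_pow, sum_ite_eq, mem_range]
  split_ifs with hk
  · rfl
  · simp [Nat.choose_eq_zero_of_lt (by omega : m < k)]

noncomputable def poissonWeight (l : ℝ) (n : ℕ) : ℝ := l ^ n * Real.exp (-l) / n.factorial

theorem succ_mul_poissonWeight_succ (l : ℝ) (n : ℕ) :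
    ((n : ℝ) + 1) * poissonWeight l (n + 1) = l * poissonWeight l n := by
  simp only [poissonWeight, Nat.factorial_succ, Nat.cast_mul, Nat.cast_succ, pow_succ]
  field_simp

theorem hasDerivAt_poissonWeight (l : ℝ) (n : ℕ) :
    HasDerivAt (fun l => poissonWeight l n)
      ((if n = 0 then 0 else poissonWeight l (n - 1)) - poissonWeight l n) l := by
  refine (((hasDerivAt_pow n l).fun_mul (hasDerivAt_neg l).exp).div_const _).congr_deriv ?_
  rcases n with _ | n
  · simp [poissonWeight]
  · simp only [poissonWeight, Nat.factorial_succ, Nat.cast_mul, Nat.cast_succ, pow_succ,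
      Nat.add_sub_cancel, if_neg (Nat.succ_ne_zero n)]
    field_simp
    ring

theorem solvesBirthDeathCMEAt_poisson {k₀ γ t : ℝ} {lam : ℝ → ℝ}
    (hlam : HasDerivAt lam (k₀ - γ * lam t) t) :
    SolvesBirthDeathCMEAt k₀ γ (fun s => mk (poissonWeight (lam s))) t := by
  intro n
  simp only [coeff_mk, coeff_birthDeathOperator]
  refine ((hasDerivAt_poissonWeight (lam t) n).comp t hlam).congr_deriv ?_
  have hrec := succ_mul_poissonWeight_succ (lam t)
  rcases n with _ | n
  · simp only [if_pos, Nat.cast_zero]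
    linear_combination -γ * hrec 0
  · have hrec' := hrec (n + 1)
    simp only [Nat.add_one_ne_zero, if_false, Nat.add_sub_cancel]
    push_cast at hrec' ⊢
    linear_combination γ * hrec n - γ * hrec'

theorem coeff_mul_eq_sum_range_of_coeff_eq_zero {R : Type*} [Semiring R] {G H : R⟦X⟧} {d : ℕ}
    (hH : ∀ k, d < k → coeff k H = 0) (n : ℕ) :
    coeff n (G * H) = ∑ k ∈ range (min n d + 1), coeff (n - k) G * coeff k H := by
  rw [coeff_mul, ← Nat.sum_antidiagonal_swap]
  simp only [Prod.fst_swap, Prod.snd_swap]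
  rw [Nat.sum_antidiagonal_eq_sum_range_succ (fun i j => coeff j G * coeff i H)]
  refine (sum_subset (range_subset_range.2 (by omega)) fun k hk hk' => ?_).symm
  simp only [mem_range] at hk hk'
  rw [hH k (by omega), mul_zero]

theorem birth_death_transition_probability_solves_CME_general
    (k₀ γ t₀ : ℝ) (hγ : 0 < γ) (ξ : ℕ)
    (w lam : ℝ → ℝ) (P : ℕ → ℝ → ℝ)
    (hw : w = fun t => Real.exp (-γ * (t - t₀)))
    (hlam : lam = fun t => (k₀ / γ) * (1 - Real.exp (-γ * (t - t₀))))
    (hP : P = fun x t => ∑ k ∈ Finset.range (min x ξ + 1),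
        (lam t ^ (x - k) * Real.exp (-(lam t)) / (x - k).factorial)
          * ((ξ.choose k : ℝ) * w t ^ k * (1 - w t) ^ (ξ - k))) :
    ∀ (x : ℕ) (t : ℝ),
      deriv (fun t' => P x t') t
        = k₀ * ((if x = 0 then 0 else P (x - 1) t) - P x t)
          + γ * ((x + 1 : ℝ) * P (x + 1) t - (x : ℝ) * P x t) := by
  intro x t
  let G : ℝ → ℝ⟦X⟧ := fun s => mk (poissonWeight (lam s)) * (C (1 - w s) + C (w s) * X) ^ ξ
  have hw' : HasDerivAt w (-γ * w t) t := by
    subst hw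
    simpa [mul_comm] using (((hasDerivAt_id t).sub_const t₀).const_mul (-γ)).exp
  have hlam' : HasDerivAt lam (k₀ - γ * lam t) t := by
    have hlam_w : lam = fun s => k₀ / γ * (1 - w s) := by rw [hlam, hw]
    subst hlam_w
    refine ((hw'.const_sub 1).const_mul (k₀ / γ)).congr_deriv ?_
    field_simp
    ring
  have hG : SolvesBirthDeathCMEAt k₀ γ G t :=
    (solvesBirthDeathCMEAt_poisson hlam').mul ((solvesBirthDeathCMEAt_bernoulli hw').pow ξ)
  have hPG : P = fun y s => coeff y (G s) := by
    funext y s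
    rw [hP, coeff_mul_eq_sum_range_of_coeff_eq_zero (d := ξ) fun k hk => by
      rw [coeff_bernoulli_pow, Nat.choose_eq_zero_of_lt hk, Nat.cast_zero, zero_mul, zero_mul]]
    simp only [coeff_mk, coeff_bernoulli_pow, poissonWeight]
  simp only [hPG]
  exact (hG x).deriv.trans (coeff_birthDeathOperator k₀ γ (G t) x)

/-- The function
`P(x,t) = Σ_{k=0}^{min(x,ξ)} [λ(t)^{x-k} e^{-λ(t)}/(x-k)!]·[C(ξ,k) w(t)^k (1-w(t))^{ξ-k}]`,
with `w(t) = e^{-γ(t-t₀)}` and `λ(t) = (k₀/γ)(1 - e^{-γ(t-t₀)})`, satisfies the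
birth-death chemical master equation
`∂P(x,t)/∂t = k₀[P(x-1,t) - P(x,t)] + γ[(x+1)P(x+1,t) - xP(x,t)]`
for all `x ∈ ℕ`, with the convention `P(-1,t) = 0`. -/
theorem birth_death_transition_probability_solves_CME
    (k₀ γ t₀ : ℝ) (hk : 0 < k₀) (hγ : 0 < γ) (ξ : ℕ)
    (w lam : ℝ → ℝ) (P : ℕ → ℝ → ℝ)
    (hw : w = fun t => Real.exp (-γ * (t - t₀)))
    (hlam : lam = fun t => (k₀ / γ) * (1 - Real.exp (-γ * (t - t₀))))
    (hP : P = fun x t => ∑ k ∈ Finset.range (min x ξ + 1),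
        (lam t ^ (x - k) * Real.exp (-(lam t)) / (x - k).factorial)
          * ((ξ.choose k : ℝ) * w t ^ k * (1 - w t) ^ (ξ - k))) :
    ∀ (x : ℕ) (t : ℝ),
      deriv (fun t' => P x t') t
        = k₀ * ((if x = 0 then 0 else P (x - 1) t) - P x t)
          + γ * ((x + 1 : ℝ) * P (x + 1) t - (x : ℝ) * P x t) :=
  birth_death_transition_probability_solves_CME_general k₀ γ t₀ hγ ξ w lam P hw hlam hP
end

section
/- The Grassberger–Scheunert inner product of basis states, ⟨x|y⟩ = Σ_k x!y!/((x-k)!(y-k)!k!) where the sum runs over 0 ≤ k ≤ min(x,y), is symmetric in x and y, and satisfies the adjoint relation ⟨x|a|y⟩ = ⟨y|π - 1|x⟩, i.e., y·⟨x|y-1⟩ = ⟨y|x+1⟩ - ⟨y|x⟩, for all x, y ∈ ℕ (one-dimensional case). -/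
/-- The one-dimensional Grassberger–Scheunert inner product of basis states:
`⟨x|y⟩ = Σ_{k=0}^{min(x,y)} x!y!/((x-k)!(y-k)!k!)`. -/
noncomputable def gsProduct (x y : ℕ) : ℝ :=
  ∑ k ∈ Finset.range (min x y + 1),
    (x.factorial : ℝ) * y.factorial
      / ((x - k).factorial * (y - k).factorial * k.factorial)

/-- Natural-number version of the GS product, over an arbitrary range. -/
def gsN (x y M : ℕ) : ℕ :=
  ∑ k ∈ Finset.range M, x.choose k * y.choose k * k.factorial

lemma gsN_symm (x y M : ℕ) : gsN x y M = gsN y x M := by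
  unfold gsN
  refine Finset.sum_congr rfl fun k _ => by ring

lemma gsProduct_eq_gsN (x y M : ℕ) (hM : min x y + 1 ≤ M) :
    gsProduct x y = (gsN x y M : ℝ) := by
  unfold gsProduct gsN
  push_cast
  rw [← Finset.sum_subset (Finset.range_subset_range.mpr hM)
      (f := fun k => ((x.choose k : ℝ) * y.choose k * k.factorial))]
  · refine Finset.sum_congr rfl fun k hk => ?_
    rw [Finset.mem_range] at hk
    have hkx : k ≤ x := le_trans (Nat.lt_succ_iff.mp hk) (min_le_left _ _)
    have hky : k ≤ y := le_trans (Nat.lt_succ_iff.mp hk) (min_le_right _ _)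
    rw [Nat.cast_choose ℝ hkx, Nat.cast_choose ℝ hky]
    have h1 : (k.factorial : ℝ) ≠ 0 := Nat.cast_ne_zero.mpr k.factorial_ne_zero
    have h2 : ((x - k).factorial : ℝ) ≠ 0 := Nat.cast_ne_zero.mpr (x - k).factorial_ne_zero
    have h3 : ((y - k).factorial : ℝ) ≠ 0 := Nat.cast_ne_zero.mpr (y - k).factorial_ne_zero
    field_simp
  · intro k _ hk
    rw [Finset.mem_range, Nat.lt_succ_iff] at hk
    have : ¬ k ≤ min x y := hk
    rw [le_min_iff] at this
    push_neg at this
    rcases le_or_gt k x with h | h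
    · rw [Nat.choose_eq_zero_of_lt (this h)]
      simp
    · rw [Nat.choose_eq_zero_of_lt h]
      simp

/-- The key combinatorial identity. -/
lemma gsN_key (x n : ℕ) :
    gsN (x + 1) (n + 1) (x + n + 2) =
      (n + 1) * gsN x n (x + n + 2) + gsN x (n + 1) (x + n + 2) := by
  unfold gsN
  have hM : x + n + 2 = (x + n + 1) + 1 := rfl
  rw [hM, Finset.sum_range_succ' (fun k => (x+1).choose k * (n+1).choose k * k.factorial),
    Finset.sum_range_succ' (fun k => x.choose k * (n+1).choose k * k.factorial)]
  have hsplit :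
      ∑ i ∈ Finset.range (x + n + 1),
          (x+1).choose (i+1) * ((n+1).choose (i+1)) * (i+1).factorial
        = (∑ i ∈ Finset.range (x + n + 1), x.choose i * (n+1).choose (i+1) * (i+1).factorial)
          + ∑ i ∈ Finset.range (x + n + 1), x.choose (i+1) * (n+1).choose (i+1) * (i+1).factorial := by
    rw [← Finset.sum_add_distrib]
    refine Finset.sum_congr rfl fun i _ => ?_
    rw [Nat.choose_succ_succ]
    ring
  rw [hsplit]
  have hterm : ∀ i, x.choose i * (n+1).choose (i+1) * (i+1).factorial
      = (n + 1) * (x.choose i * n.choose i * i.factorial) := by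
    intro i
    have h := Nat.add_one_mul_choose_eq n i
    calc x.choose i * (n+1).choose (i+1) * (i+1).factorial
        = x.choose i * ((n+1).choose (i+1) * (i+1)) * i.factorial := by
          rw [Nat.factorial_succ]; ring
      _ = x.choose i * ((n+1) * n.choose i) * i.factorial := by
          rw [← h]
      _ = (n + 1) * (x.choose i * n.choose i * i.factorial) := by ring
  have hfirst :
      ∑ i ∈ Finset.range (x + n + 1), x.choose i * (n+1).choose (i+1) * (i+1).factorial
        = (n + 1) * ∑ i ∈ Finset.range (x + n + 1), x.choose i * n.choose i * i.factorial := by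
    rw [Finset.mul_sum]
    exact Finset.sum_congr rfl fun i _ => hterm i
  rw [hfirst]
  have hlast : ∑ i ∈ Finset.range ((x + n + 1) + 1), x.choose i * n.choose i * i.factorial
      = ∑ i ∈ Finset.range (x + n + 1), x.choose i * n.choose i * i.factorial := by
    rw [Finset.sum_range_succ, Nat.choose_eq_zero_of_lt (by omega)]
    simp
  rw [hlast]
  simp only [Nat.choose_zero_right, Nat.factorial_zero]
  ring

/-- The Grassberger–Scheunert product is symmetric and satisfies the adjoint
relation `⟨x|a|y⟩ = ⟨y|π-1|x⟩`, i.e. `y·⟨x|y-1⟩ = ⟨y|x+1⟩ - ⟨y|x⟩`. -/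
theorem gsProduct_symm_and_adjoint :
    (∀ x y : ℕ, gsProduct x y = gsProduct y x)
    ∧ (∀ x y : ℕ, (y : ℝ) * gsProduct x (y - 1) = gsProduct y (x + 1) - gsProduct y x) := by
  constructor
  · intro x y
    rw [gsProduct_eq_gsN x y (x + y + 2) (by omega),
      gsProduct_eq_gsN y x (x + y + 2) (by omega), gsN_symm]
  · intro x y
    cases y with
    | zero =>
      have h1 : ∀ m : ℕ, gsProduct 0 m = 1 := by
        intro m
        unfold gsProduct
        simp [Nat.factorial_ne_zero]
      simp [h1]
    | succ n =>
      have e1 : gsProduct x (n + 1 - 1) = (gsN x n (x + n + 2) : ℝ) := by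
        simpa using gsProduct_eq_gsN x n (x + n + 2) (by omega)
      have e2 : gsProduct (n + 1) (x + 1) = (gsN (x + 1) (n + 1) (x + n + 2) : ℝ) := by
        rw [gsProduct_eq_gsN (n+1) (x+1) (x + n + 2) (by omega), gsN_symm]
      have e3 : gsProduct (n + 1) x = (gsN x (n + 1) (x + n + 2) : ℝ) := by
        rw [gsProduct_eq_gsN (n+1) x (x + n + 2) (by omega), gsN_symm]
      rw [e1, e2, e3, gsN_key]
      push_cast
      ring
end

section
/- For the one-dimensional Grassberger–Scheunert product, ⟨x|z⟩ = (1+z)^x for any basis state |x⟩ and coherent state |z⟩ = Σ_y (z^y/y!)e^{-z}|y⟩. Equivalently, Σ_{y=0}^∞ (z^y/y!)e^{-z} · Σ_{k=0}^{min(x,y)} x!y!/((x-k)!(y-k)!k!) = (1+z)^x. -/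
/-- Grassberger–Scheunert product of a basis state with a coherent state:
`⟨x|z⟩ = (1+z)^x`, i.e.
`Σ_{y=0}^∞ (z^y/y!)e^{-z} · Σ_{k=0}^{min(x,y)} x!y!/((x-k)!(y-k)!k!) = (1+z)^x`. -/
theorem gs_product_basis_coherent (z : ℝ) (x : ℕ) :
    ∑' y : ℕ, (z ^ y / (y.factorial : ℝ)) * Real.exp (-z)
        * ∑ k ∈ Finset.range (min x y + 1),
            (x.factorial : ℝ) * y.factorial
              / ((x - k).factorial * (y - k).factorial * k.factorial)
      = (1 + z) ^ x := by
  -- f k y : the (k,y) term, extended by 0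
  set f : ℕ → ℕ → ℝ := fun k y =>
    if k ≤ y then Real.exp (-z) * (x.choose k : ℝ) * (z ^ y / (y - k).factorial) else 0
    with hf
  have key : ∀ y : ℕ, (z ^ y / (y.factorial : ℝ)) * Real.exp (-z)
        * ∑ k ∈ Finset.range (min x y + 1),
            (x.factorial : ℝ) * y.factorial
              / ((x - k).factorial * (y - k).factorial * k.factorial)
      = ∑ k ∈ Finset.range (x + 1), f k y := by
    intro y
    rw [Finset.mul_sum]
    rw [← Finset.sum_subset (Finset.range_subset_range.2 (by omega) :
        Finset.range (min x y + 1) ⊆ Finset.range (x + 1))]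
    · apply Finset.sum_congr rfl
      intro k hk
      simp only [Finset.mem_range] at hk
      have hky : k ≤ y := by omega
      have hkx : k ≤ x := by omega
      rw [hf]
      simp only [hky, if_true]
      have h1 : (x.choose k : ℝ) = (x.factorial : ℝ) / ((k.factorial : ℝ) * (x - k).factorial) := by
        rw [eq_div_iff (by positivity)]
        norm_cast
        rw [← Nat.choose_mul_factorial_mul_factorial hkx]
        ring
      rw [h1]
      have hy : (y.factorial : ℝ) ≠ 0 := by positivity
      field_simp
    · intro k hk hk'
      simp only [Finset.mem_range] at hk hk'
      have : ¬ k ≤ y := by omega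
      rw [hf]
      simp [this]
  have hsum : ∀ k, Summable (f k) := by
    intro k
    have hzero : ∀ y ∉ Set.range (fun n : ℕ => n + k), f k y = 0 := by
      intro y hy
      have : ¬ k ≤ y := by
        intro h
        exact hy ⟨y - k, by simpa using by omega⟩
      simp [hf, this]
    rw [← (add_left_injective k).summable_iff hzero]
    have : (f k ∘ fun n : ℕ => n + k) =
        fun n : ℕ => Real.exp (-z) * (x.choose k : ℝ) * z ^ k * (z ^ n / n.factorial) := by
      funext n
      simp only [Function.comp, hf, Nat.le_add_left, if_true, Nat.add_sub_cancel]
      rw [pow_add]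
      ring
    rw [this]
    exact ((Real.summable_pow_div_factorial z).mul_left _)
  have hexp : ∑' n : ℕ, z ^ n / (n.factorial : ℝ) = Real.exp z := by
    rw [Real.exp_eq_exp_ℝ, NormedSpace.exp_eq_tsum_div]
  have htk : ∀ k, ∑' y, f k y
      = Real.exp (-z) * (x.choose k : ℝ) * z ^ k * Real.exp z := by
    intro k
    have hzero : Function.support (f k) ⊆ Set.range (fun n : ℕ => n + k) := by
      intro y hy
      by_contra hc
      apply hy
      have : ¬ k ≤ y := by
        intro h; exact hc ⟨y - k, by simpa using by omega⟩
      simp [hf, this]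
    rw [← (add_left_injective k).tsum_eq hzero]
    have : (fun n : ℕ => f k (n + k)) =
        fun n : ℕ => Real.exp (-z) * (x.choose k : ℝ) * z ^ k * (z ^ n / n.factorial) := by
      funext n
      simp only [hf, Nat.le_add_left, if_true, Nat.add_sub_cancel]
      rw [pow_add]
      ring
    rw [this, tsum_mul_left, hexp]
  calc ∑' y : ℕ, (z ^ y / (y.factorial : ℝ)) * Real.exp (-z)
        * ∑ k ∈ Finset.range (min x y + 1),
            (x.factorial : ℝ) * y.factorial
              / ((x - k).factorial * (y - k).factorial * k.factorial)
      = ∑' y : ℕ, ∑ k ∈ Finset.range (x + 1), f k y := by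
        exact tsum_congr key
    _ = ∑ k ∈ Finset.range (x + 1), ∑' y, f k y := by
        exact Summable.tsum_finsetSum (fun k _ => hsum k)
    _ = ∑ k ∈ Finset.range (x + 1), Real.exp (-z) * (x.choose k : ℝ) * z ^ k * Real.exp z := by
        exact Finset.sum_congr rfl fun k _ => htk k
    _ = (Real.exp (-z) * Real.exp z) * ∑ k ∈ Finset.range (x + 1), z ^ k * (x.choose k : ℝ) := by
        rw [Finset.mul_sum]
        exact Finset.sum_congr rfl fun k _ => by ring
    _ = (1 + z) ^ x := by
        rw [← Real.exp_add, neg_add_cancel, Real.exp_zero, one_mul, add_comm (1:ℝ) z, add_pow]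
        simp
end

section
/- For constants k, γ, c > 0 with γ > c, the distribution P_ss(x) = ((γ-c)/γ)^{k/c} · (c/γ)^x · (k/c)_x / x!, where (y)_x = y(y+1)⋯(y+x-1) is the rising factorial, satisfies the stationary master equation k[P_ss(x-1) - P_ss(x)] + γ[(x+1)P_ss(x+1) - xP_ss(x)] + c[(x-1)P_ss(x-1) - xP_ss(x)] = 0 for all x ∈ ℕ (with P_ss(-1) = 0). -/
/-- The rising factorial (Pochhammer symbol) `(y)_x = y(y+1)⋯(y+x-1)`. -/
def risingFactorial (y : ℝ) : ℕ → ℝ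
  | 0 => 1
  | (x + 1) => risingFactorial y x * (y + x)

/-- For constants `k, γ, c > 0` with `γ > c`, the distribution
`P_ss(x) = ((γ-c)/γ)^{k/c} · (c/γ)^x · (k/c)_x / x!` satisfies the stationary
master equation of the birth-death-autocatalysis system:
`k[P_ss(x-1) - P_ss(x)] + γ[(x+1)P_ss(x+1) - xP_ss(x)]
  + c[(x-1)P_ss(x-1) - xP_ss(x)] = 0` for all `x ∈ ℕ` (with `P_ss(-1) = 0`). -/
theorem birth_death_autocatalysis_steady_state
    (k γ c : ℝ) (hk : 0 < k) (hγ : 0 < γ) (hc : 0 < c) (hγc : c < γ)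
    (Pss : ℕ → ℝ)
    (hPss : Pss = fun x =>
      ((γ - c) / γ) ^ (k / c) * (c / γ) ^ x * risingFactorial (k / c) x / x.factorial) :
    ∀ x : ℕ,
      k * ((if x = 0 then 0 else Pss (x - 1)) - Pss x)
        + γ * ((x + 1 : ℝ) * Pss (x + 1) - (x : ℝ) * Pss x)
        + c * (((x : ℝ) - 1) * (if x = 0 then 0 else Pss (x - 1)) - (x : ℝ) * Pss x) = 0 := by
  have hγ0 : γ ≠ 0 := ne_of_gt hγ
  have key : ∀ x : ℕ, γ * (x + 1 : ℝ) * Pss (x + 1) = (k + c * x) * Pss x := by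
    intro x
    subst hPss
    simp only [risingFactorial, pow_succ, Nat.factorial_succ, Nat.cast_mul, Nat.cast_add,
      Nat.cast_one]
    have hfac : (x.factorial : ℝ) ≠ 0 := Nat.cast_ne_zero.mpr x.factorial_ne_zero
    have hx1 : (x : ℝ) + 1 ≠ 0 := by positivity
    field_simp
  intro x
  cases x with
  | zero =>
      have h0 := key 0
      simp only [if_pos rfl] at *
      push_cast at h0 ⊢
      linarith [h0]
  | succ n =>
      have h1 := key n
      have h2 := key (n + 1)
      simp only [Nat.succ_ne_zero, if_false, Nat.add_sub_cancel]
      push_cast at h1 h2 ⊢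
      nlinarith [h1, h2]
end
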